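/- Let d ≥ 1 be an integer and g ∈ ℂ^d a unit vector. Then rank(G(g)) ≥ d. -/

import Mathlib

open Complex Finset

noncomputable section

/-- `gw d` is the primitive `d`-th root of unity `ω = exp(2πi/d)`. -/
def gw (d : ℕ) : ℂ := Complex.exp (2 * Real.pi * Complex.I / d)

/-- `modT d k l g = M^k T^ℓ g`, where `(Mg)_n = ω^n g_n` and `(Tg)_n = g_{n-1}`. -/
def modT (d : ℕ) (k l : ZMod d) (g : ZMod d → ℂ) : ZMod d → ℂ :=
  fun n => gw d ^ (k.val * n.val) * g (n - l)

/-- `inn d x y = ⟨x,y⟩ = Σ_n x_n conj(y_n)`. -/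
def inn (d : ℕ) [NeZero d] (x y : ZMod d → ℂ) : ℂ :=
  ∑ n : ZMod d, x n * (starRingEnd ℂ) (y n)

/-- The `d² × d²` Gram matrix `G(g)` with entries `|⟨M^k T^ℓ g, M^{k'} T^{ℓ'} g⟩|²`. -/
def Gmat (d : ℕ) [NeZero d] (g : ZMod d → ℂ) :
    Matrix (ZMod d × ZMod d) (ZMod d × ZMod d) ℂ :=
  fun p q =>
    ((‖inn d (modT d p.1 p.2 g) (modT d q.1 q.2 g)‖ ^ 2 : ℝ) : ℂ)


/-!
Write `π(k, ℓ) = M^k T^ℓ`. The Gram matrix factors as `G(g) = V Vᴴ`, where row `(k, ℓ)` of `V` is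
the rank-one projection `π(k, ℓ)g ⊗ (π(k, ℓ)g)*` flattened to a vector. Conjugating by the
symplectic Fourier matrix `F` of `(ℤ/dℤ)²` turns the projections into multiples of time-frequency
shifts, which are orthogonal, so `F G(g) Fᴴ` is diagonal with entries `d³ |A_g(w)|²`, where
`A_g` is the ambiguity function of `g`. Hence `rank G(g)` is at least the size of the support of
`A_g`. Moyal's identity `∑_w |A_g(w)|² = d ‖g‖⁴` together with the Cauchy–Schwarz bound
`|A_g(w)| ≤ ‖g‖²` forces this support to contain at least `d` points.
-/

open Matrix ZMod

section

variable {d : ℕ} [NeZero d]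

lemma gw_pow_eq_stdAddChar (n : ℕ) : gw d ^ n = stdAddChar (n : ZMod d) := by
  rw [stdAddChar_apply, toCircle_natCast, gw, ← Complex.exp_nat_mul]
  ring_nf

lemma modT_apply (k l n : ZMod d) (g : ZMod d → ℂ) :
    modT d k l g n = stdAddChar (k * n) * g (n - l) := by
  rw [modT, gw_pow_eq_stdAddChar, Nat.cast_mul, natCast_zmod_val, natCast_zmod_val]

lemma sum_stdAddChar_mul (b : ZMod d) :
    ∑ x : ZMod d, stdAddChar (x * b) = if b = 0 then (d : ℂ) else 0 := by
  rw [AddChar.sum_mulShift b (isPrimitive_stdAddChar d), ZMod.card, Nat.cast_ite, Nat.cast_zero]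

lemma sum_norm_sq_sum_stdAddChar_mul (h : ZMod d → ℂ) :
    ∑ a : ZMod d, ‖∑ j, stdAddChar (a * j) * h j‖ ^ 2 = d * ∑ j, ‖h j‖ ^ 2 := by
  apply Complex.ofReal_injective
  push_cast
  simp_rw [← Complex.mul_conj', map_sum, map_mul, ← AddChar.map_neg_eq_conj, Finset.sum_mul_sum,
    Finset.mul_sum]
  rw [Finset.sum_comm]
  refine Finset.sum_congr rfl fun j _ => ?_
  rw [Finset.sum_comm]
  have horth (j' : ZMod d) :
      ∑ a : ZMod d, stdAddChar (a * j) * h j * (stdAddChar (-(a * j')) * starRingEnd ℂ (h j')) =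
        (if j - j' = 0 then (d : ℂ) else 0) * (h j * starRingEnd ℂ (h j')) := by
    rw [← sum_stdAddChar_mul, Finset.sum_mul]
    refine Finset.sum_congr rfl fun a _ => ?_
    rw [mul_sub, sub_eq_add_neg, AddChar.map_add_eq_mul]
    ring
  simp_rw [horth, sub_eq_zero, ite_mul, zero_mul, Finset.sum_ite_eq, Finset.mem_univ, if_true]

lemma le_card_ne_zero_of_sum_eq {ι : Type*} [Fintype ι] {f : ι → ℝ} {M : ℝ} {n : ℕ}
    (hM : 0 < M) (hf : ∀ i, f i ≤ M) (hsum : ∑ i, f i = n * M) :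
    n ≤ Fintype.card {i // f i ≠ 0} := by
  classical
  have : n * M ≤ Fintype.card {i // f i ≠ 0} * M := by
    rw [← hsum, ← Finset.sum_filter_ne_zero, Fintype.card_subtype, ← nsmul_eq_mul]
    exact Finset.sum_le_card_nsmul _ _ _ fun i _ => hf i
  exact_mod_cast le_of_mul_le_mul_right this hM

variable (g : ZMod d → ℂ)

def ambiguity (w : ZMod d × ZMod d) : ℂ :=
  ∑ j, stdAddChar (w.1 * j) * (g j * starRingEnd ℂ (g (j - w.2)))

lemma sum_norm_sq_ambiguity :
    ∑ w, ‖ambiguity g w‖ ^ 2 = d * (∑ n, ‖g n‖ ^ 2) ^ 2 := by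
  rw [Fintype.sum_prod_type, Finset.sum_comm]
  simp_rw [ambiguity, sum_norm_sq_sum_stdAddChar_mul, ← Finset.mul_sum, norm_mul,
    Complex.norm_conj, mul_pow]
  rw [Finset.sum_comm, sq (∑ n, _), Finset.sum_mul_sum]
  simp_rw [← Finset.mul_sum]
  congr 2 with j
  rw [← Equiv.sum_comp (Equiv.subLeft j)]
  simp

lemma norm_sq_ambiguity_le (w : ZMod d × ZMod d) :
    ‖ambiguity g w‖ ^ 2 ≤ (∑ n, ‖g n‖ ^ 2) ^ 2 := by
  have hshift : ∑ j, ‖g (j - w.2)‖ ^ 2 = ∑ n, ‖g n‖ ^ 2 :=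
    Equiv.sum_comp (Equiv.subRight w.2) fun n => ‖g n‖ ^ 2
  calc ‖ambiguity g w‖ ^ 2 ≤ (∑ j, ‖g j‖ * ‖g (j - w.2)‖) ^ 2 := by
        gcongr
        refine (norm_sum_le _ _).trans (le_of_eq ?_)
        simp [AddChar.norm_apply]
    _ ≤ (∑ j, ‖g j‖ ^ 2) * ∑ j, ‖g (j - w.2)‖ ^ 2 := Finset.sum_mul_sq_le_sq_mul_sq _ _ _
    _ = (∑ n, ‖g n‖ ^ 2) ^ 2 := by rw [hshift, sq]

lemma le_card_ambiguity_ne_zero (hg : g ≠ 0) :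
    d ≤ Fintype.card {w // ambiguity g w ≠ 0} := by
  obtain ⟨n, hn⟩ := Function.ne_iff.mp hg
  have hpos : 0 < (∑ n, ‖g n‖ ^ 2) ^ 2 :=
    pow_pos ((pow_pos (norm_pos_iff.mpr hn) 2).trans_le
      (Finset.single_le_sum (fun i _ => sq_nonneg ‖g i‖) (Finset.mem_univ n))) 2
  simpa using le_card_ne_zero_of_sum_eq hpos (norm_sq_ambiguity_le g) (sum_norm_sq_ambiguity g)

def projectionRows : Matrix (ZMod d × ZMod d) (ZMod d × ZMod d) ℂ :=
  fun p q => modT d p.1 p.2 g q.1 * starRingEnd ℂ (modT d p.1 p.2 g q.2)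

lemma Gmat_eq_projectionRows_mul_conjTranspose :
    Gmat d g = projectionRows g * (projectionRows g)ᴴ := by
  ext p q
  rw [Gmat, Matrix.mul_apply, Complex.ofReal_pow, ← Complex.mul_conj', inn, map_sum,
    Finset.sum_mul_sum, Fintype.sum_prod_type]
  refine Finset.sum_congr rfl fun m _ => Finset.sum_congr rfl fun n _ => ?_
  simp only [projectionRows, conjTranspose_apply, RCLike.star_def, map_mul, Complex.conj_conj]
  ring

variable (d) in
def symplecticFourier : Matrix (ZMod d × ZMod d) (ZMod d × ZMod d) ℂ :=
  fun w p => stdAddChar (-(p.1 * w.2 + p.2 * w.1))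

lemma symplecticFourier_mul_projectionRows_apply (w q : ZMod d × ZMod d) :
    (symplecticFourier d * projectionRows g) w q =
      if q.2 = q.1 - w.2 then d * (stdAddChar (-(q.1 * w.1)) * ambiguity g w) else 0 := by
  obtain ⟨a, b⟩ := w
  obtain ⟨m, n⟩ := q
  have hsummand (k l : ZMod d) :
      symplecticFourier d (a, b) (k, l) * projectionRows g (k, l) (m, n) =
        stdAddChar (k * (m - n - b)) *
          (stdAddChar (-(l * a)) * (g (m - l) * starRingEnd ℂ (g (n - l)))) := by
    have hchar : stdAddChar (-(k * b + l * a)) * stdAddChar (k * m) * stdAddChar (-(k * n)) =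
        stdAddChar (k * (m - n - b)) * stdAddChar (-(l * a)) := by
      simp only [← AddChar.map_add_eq_mul]
      ring_nf
    simp only [symplecticFourier, projectionRows, modT_apply, map_mul,
      ← AddChar.map_neg_eq_conj]
    linear_combination (g (m - l) * starRingEnd ℂ (g (n - l))) * hchar
  have hcond : m - n - b = 0 ↔ n = m - b := by
    rw [sub_sub, sub_eq_zero, eq_sub_iff_add_eq, eq_comm]
  simp only [Matrix.mul_apply, Fintype.sum_prod_type, hsummand]
  rw [← Finset.sum_mul_sum, sum_stdAddChar_mul]
  simp only [hcond]
  split_ifs with h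
  · subst h
    congr 1
    rw [ambiguity, Finset.mul_sum, ← Equiv.sum_comp (Equiv.subLeft m)]
    refine Finset.sum_congr rfl fun j _ => ?_
    rw [Equiv.subLeft_apply, sub_sub_cancel, show m - b - (m - j) = j - b by ring,
      show -((m - j) * a) = -(m * a) + a * j by ring, AddChar.map_add_eq_mul]
    ring
  · rw [zero_mul]

lemma symplecticFourier_mul_Gmat_mul_conjTranspose :
    symplecticFourier d * Gmat d g * (symplecticFourier d)ᴴ =
      diagonal fun w => (d : ℂ) ^ 3 * ‖ambiguity g w‖ ^ 2 := by
  ext ⟨a, b⟩ ⟨a', b'⟩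
  rw [Gmat_eq_projectionRows_mul_conjTranspose, ← Matrix.mul_assoc, Matrix.mul_assoc,
    ← conjTranspose_mul, Matrix.mul_apply]
  simp only [conjTranspose_apply, symplecticFourier_mul_projectionRows_apply,
    Fintype.sum_prod_type, RCLike.star_def, apply_ite (starRingEnd ℂ), map_zero, ite_mul,
    zero_mul, mul_ite, mul_zero, Finset.sum_ite_eq', Finset.mem_univ, if_true]
  simp_rw [sub_right_inj]
  by_cases hb : b' = b
  · subst hb
    have hterm (x : ZMod d) :
        d * (stdAddChar (-(x * a)) * ambiguity g (a, b')) *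
          starRingEnd ℂ (d * (stdAddChar (-(x * a')) * ambiguity g (a', b'))) =
        d ^ 2 * (ambiguity g (a, b') * starRingEnd ℂ (ambiguity g (a', b'))) *
          stdAddChar (x * (a' - a)) := by
      simp only [map_mul, map_natCast, ← AddChar.map_neg_eq_conj, neg_neg]
      rw [mul_sub, sub_eq_add_neg, AddChar.map_add_eq_mul]
      ring
    simp only [if_true, hterm, ← Finset.mul_sum, sum_stdAddChar_mul, sub_eq_zero]
    by_cases ha : a' = a
    · subst ha
      rw [if_pos rfl, diagonal_apply_eq, Complex.mul_conj']
      ring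
    · rw [if_neg ha, mul_zero, diagonal_apply_ne _ (by simp [Ne.symm ha])]
  · rw [diagonal_apply_ne _ (by simp [Ne.symm hb])]
    simp only [hb, if_false, Finset.sum_const_zero]

lemma le_rank_Gmat (hg : g ≠ 0) : d ≤ (Gmat d g).rank := by
  classical
  calc d ≤ Fintype.card {w // ambiguity g w ≠ 0} := le_card_ambiguity_ne_zero g hg
    _ = Fintype.card {w // (d : ℂ) ^ 3 * ‖ambiguity g w‖ ^ 2 ≠ 0} :=
        Fintype.card_congr (Equiv.subtypeEquivRight fun w => by simp [NeZero.ne d])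
    _ = (symplecticFourier d * Gmat d g * (symplecticFourier d)ᴴ).rank := by
        rw [symplecticFourier_mul_Gmat_mul_conjTranspose, rank_diagonal]
    _ ≤ (Gmat d g).rank := (rank_mul_le_left _ _).trans (rank_mul_le_right _ _)

end

theorem stmt5_general (d : ℕ) [NeZero d] (g : ZMod d → ℂ)
    (hg : ∑ n : ZMod d, ‖g n‖ ^ 2 = 1) :
    d ≤ (Gmat d g).rank := by
  refine le_rank_Gmat g ?_
  rintro rfl
  simp at hg

/-- `rank G(g) ≥ d` for every unit vector `g ∈ ℂ^d`. -/
theorem stmt5 (d : ℕ) [NeZero d] (hd : 1 ≤ d) (g : ZMod d → ℂ)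
    (hg : ∑ n : ZMod d, ‖g n‖ ^ 2 = 1) :
    d ≤ (Gmat d g).rank :=
  stmt5_general d g hg
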